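/- There exists a constant c > 0 such that for every positive integer n, the energy complexity of the n-bit OR function satisfies EC(OR_n) ≤ c·√n. -/

import Mathlib

/-- A gate in a Boolean circuit over the standard basis `{∨₂, ∧₂, ¬}`:
input gates labelled by variables, constant gates, and `∧`/`∨`/`¬` gates
whose arguments are (indices of) earlier gates. -/
inductive Gate (n : ℕ) : Type where
  | input : Fin n → Gate n
  | const : Bool → Gate n
  | and : ℕ → ℕ → Gate n
  | or : ℕ → ℕ → Gate n
  | not : ℕ → Gate n
deriving DecidableEq

/-- The indices of the incoming gates of a gate. -/
def Gate.deps {n : ℕ} : Gate n → List ℕ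
  | .and a b => [a, b]
  | .or a b => [a, b]
  | .not a => [a]
  | _ => []

/-- Inner gates are the non-input (and non-constant) gates, i.e. `∧`, `∨`, `¬` gates. -/
def Gate.isInner {n : ℕ} : Gate n → Bool
  | .and _ _ => true
  | .or _ _ => true
  | .not _ => true
  | _ => false

/-- A Boolean circuit over the standard basis on `n` input variables: a sequence of
gates (topologically sorted, so each gate only takes earlier gates as inputs,
which makes the underlying graph acyclic) together with a designated output gate. -/
structure Circuit (n : ℕ) : Type where
  size : ℕ
  gates : Fin size → Gate n
  out : Fin size
  wf : ∀ i : Fin size, ∀ j ∈ (gates i).deps, j < (i : ℕ)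

/-- The Boolean value of gate `i` of circuit `C` under input `x`. -/
def Circuit.evalGate {n : ℕ} (C : Circuit n) (x : Fin n → Bool) (i : ℕ) (h : i < C.size) :
    Bool :=
  match hg : C.gates ⟨i, h⟩ with
  | .input j => x j
  | .const b => b
  | .not a =>
      have ha : a < i := C.wf ⟨i, h⟩ a (by rw [hg]; simp [Gate.deps])
      ! C.evalGate x a (ha.trans h)
  | .and a b =>
      have ha : a < i := C.wf ⟨i, h⟩ a (by rw [hg]; simp [Gate.deps])
      have hb : b < i := C.wf ⟨i, h⟩ b (by rw [hg]; simp [Gate.deps])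
      C.evalGate x a (ha.trans h) && C.evalGate x b (hb.trans h)
  | .or a b =>
      have ha : a < i := C.wf ⟨i, h⟩ a (by rw [hg]; simp [Gate.deps])
      have hb : b < i := C.wf ⟨i, h⟩ b (by rw [hg]; simp [Gate.deps])
      C.evalGate x a (ha.trans h) || C.evalGate x b (hb.trans h)
termination_by i

/-- The output of circuit `C` on input `x`. -/
def Circuit.output {n : ℕ} (C : Circuit n) (x : Fin n → Bool) : Bool :=
  C.evalGate x C.out C.out.isLt

/-- `C` computes the Boolean function `f`. -/
def Circuit.Computes {n : ℕ} (C : Circuit n) (f : (Fin n → Bool) → Bool) : Prop :=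
  ∀ x, C.output x = f x

/-- The number of activated inner gates of `C` under input `x`. -/
def Circuit.energyAt {n : ℕ} (C : Circuit n) (x : Fin n → Bool) : ℕ :=
  (Finset.univ.filter fun i : Fin C.size =>
    (C.gates i).isInner = true ∧ C.evalGate x i i.isLt = true).card

/-- The energy complexity `EC(C)` of a circuit `C`: the maximum number of
activated inner gates over all inputs. -/
def Circuit.energy {n : ℕ} (C : Circuit n) : ℕ :=
  Finset.univ.sup fun x : Fin n → Bool => C.energyAt x

/-- The energy complexity `EC(f)` of a Boolean function `f`: the minimum of `EC(C)`
over all circuits `C` computing `f`. -/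
noncomputable def EC {n : ℕ} (f : (Fin n → Bool) → Bool) : ℕ :=
  sInf {k | ∃ C : Circuit n, C.Computes f ∧ C.energy = k}

/-- The `n`-bit OR function. -/
def ORf (n : ℕ) : (Fin n → Bool) → Bool := fun x => decide (∃ i, x i = true)

/-!
Split the zero-padded input into `l` blocks of `m` bits and let `F_k` be the OR of the first
`k + 1` blocks. Computing `F_k = F_{k-1} ∨ ⋁_j (y_{k,j} ∧ ¬F_{k-1})`, the bits of block `k` are
masked by `¬F_{k-1}`, so all gates of a block except its mask and `F_k` stay at `0` unless the
block contains the first `1` of the input. At most `2 l + 2 m + 3` inner gates are therefore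
activated, and `l = m = ⌊√n⌋ + 1` gives `O(√n)`.
-/

namespace Gate

variable {n : ℕ}

def eval (x : Fin n → Bool) (v : ℕ → Bool) : Gate n → Bool
  | .input j => x j
  | .const b => b
  | .and a b => v a && v b
  | .or a b => v a || v b
  | .not a => !v a

theorem eval_congr {x : Fin n → Bool} {v w : ℕ → Bool} {g : Gate n}
    (h : ∀ j ∈ g.deps, v j = w j) : g.eval x v = g.eval x w := by
  cases g <;> simp_all [eval, deps]

end Gate

namespace Circuit

variable {n : ℕ} (C : Circuit n)

theorem evalGate_eq_eval (x : Fin n → Bool) (i : ℕ) (h : i < C.size) :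
    C.evalGate x i h = (C.gates ⟨i, h⟩).eval x
      (fun j => if hj : j < C.size then C.evalGate x j hj else false) := by
  have hdeps : ∀ j ∈ (C.gates ⟨i, h⟩).deps, j < C.size := fun j hj =>
    (C.wf ⟨i, h⟩ j hj).trans h
  rw [evalGate]
  split <;> rename_i hg <;> simp only [hg, Gate.deps] at hdeps <;> simp_all [Gate.eval]

def IsConsistent (x : Fin n → Bool) (v : ℕ → Bool) : Prop :=
  ∀ i (h : i < C.size), v i = (C.gates ⟨i, h⟩).eval x v

variable {C}

theorem IsConsistent.evalGate_eq {x : Fin n → Bool} {v : ℕ → Bool} (hv : C.IsConsistent x v)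
    (i : ℕ) (h : i < C.size) : C.evalGate x i h = v i := by
  induction i using Nat.strong_induction_on with
  | _ i ih =>
    rw [evalGate_eq_eval, hv i h]
    refine Gate.eval_congr fun j hj => ?_
    have hji := C.wf ⟨i, h⟩ j hj
    rw [dif_pos (hji.trans h), ih j hji]

theorem energyAt_le_card (x : Fin n → Bool) (S : Finset ℕ)
    (hS : ∀ i : Fin C.size,
      (C.gates i).isInner = true → C.evalGate x i i.isLt = true → (i : ℕ) ∈ S) :
    C.energyAt x ≤ S.card :=
  Finset.card_le_card_of_injOn Fin.val
    (fun i hi => by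
      simp only [Finset.coe_filter, Set.mem_ofPred_eq, Finset.mem_univ, true_and] at hi
      exact hS i hi.1 hi.2)
    Fin.val_injective.injOn

end Circuit

theorem EC_le_of_computes {n k : ℕ} {f : (Fin n → Bool) → Bool} {C : Circuit n}
    (hC : C.Computes f) (hk : ∀ x, C.energyAt x ≤ k) : EC f ≤ k :=
  (Nat.sInf_le (s := {k | ∃ C : Circuit n, C.Computes f ∧ C.energy = k}) ⟨C, hC, rfl⟩).trans
    (Finset.sup_le fun x _ => hk x)

namespace OrCircuit

variable {n : ℕ}

def bit (x : Fin n → Bool) (t : ℕ) : Bool := if h : t < n then x ⟨t, h⟩ else false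

def anyBelow (x : Fin n → Bool) (t : ℕ) : Bool :=
  decide (∃ i : Fin n, (i : ℕ) < t ∧ x i = true)

theorem anyBelow_zero (x : Fin n → Bool) : anyBelow x 0 = false := by
  simp [anyBelow]

theorem anyBelow_succ (x : Fin n → Bool) (t : ℕ) :
    anyBelow x (t + 1) = (anyBelow x t || bit x t) := by
  rw [Bool.eq_iff_iff]
  simp only [anyBelow, bit, Bool.or_eq_true, decide_eq_true_eq, Nat.lt_succ_iff_lt_or_eq,
    or_and_right, exists_or]
  refine or_congr_right ⟨fun ⟨i, hi, hx⟩ => ?_, fun h => ?_⟩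
  · subst hi; simpa using hx
  · split at h
    · exact ⟨_, rfl, h⟩
    · exact absurd h Bool.false_ne_true

theorem anyBelow_mono (x : Fin n → Bool) {s t : ℕ} (hst : s ≤ t) (h : anyBelow x s = true) :
    anyBelow x t = true := by
  simp only [anyBelow, decide_eq_true_eq] at h ⊢
  obtain ⟨i, hi, hx⟩ := h
  exact ⟨i, hi.trans_le hst, hx⟩

theorem anyBelow_of_le (x : Fin n → Bool) {t : ℕ} (ht : n ≤ t) : anyBelow x t = ORf n x :=
  decide_eq_decide.mpr
    ⟨fun ⟨i, _, hx⟩ => ⟨i, hx⟩, fun ⟨i, hx⟩ => ⟨i, i.isLt.trans_le ht, hx⟩⟩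

variable (m : ℕ)

/-- Gates `0, …, n - 1` read the input and gate `n` is the constant `false`. Block `k` consists
of the gates `b + r`, `r ≤ 2 m + 2`, where `b = n + 1 + k (2 m + 3)`; gate `b - 1` holds the OR
`F_{k-1}` of the first `k` blocks of `m` (zero-padded) input bits. Offset `0` is the mask
`¬F_{k-1}`, offset `j + 1` is `y_{km+j} ∧ ¬F_{k-1}`, offset `m + 1 + j` is the OR `s_j` of the
first `j` of these, and offset `2 m + 2` is `F_k = F_{k-1} ∨ s_m`. -/
def blockGate (k r : ℕ) : Gate n :=
  let b := n + 1 + k * (2 * m + 3)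
  if r = 0 then .not (b - 1)
  else if r ≤ m then .and (min (k * m + (r - 1)) n) b
  else if r = m + 1 then .const false
  else if r ≤ 2 * m + 1 then .or (b + r - 1) (b + r - m - 1)
  else .or (b - 1) (b + r - 1)

def gate (i : ℕ) : Gate n :=
  if h : i < n then .input ⟨i, h⟩
  else if i = n then .const false
  else blockGate m ((i - (n + 1)) / (2 * m + 3)) ((i - (n + 1)) % (2 * m + 3))

def blockVal (x : Fin n → Bool) (k r : ℕ) : Bool :=
  if r = 0 then !anyBelow x (k * m)
  else if r ≤ m then bit x (k * m + (r - 1)) && !anyBelow x (k * m)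
  else if r ≤ 2 * m + 1 then anyBelow x (k * m + (r - (m + 1))) && !anyBelow x (k * m)
  else anyBelow x (k * m + m)

def val (x : Fin n → Bool) (i : ℕ) : Bool :=
  if i ≤ n then bit x i
  else blockVal m x ((i - (n + 1)) / (2 * m + 3)) ((i - (n + 1)) % (2 * m + 3))

theorem blockVal_zero (x : Fin n → Bool) (k : ℕ) : blockVal m x k 0 = !anyBelow x (k * m) := rfl

theorem blockVal_of_le (x : Fin n → Bool) {k r : ℕ} (hr₀ : r ≠ 0) (hr : r ≤ m) :
    blockVal m x k r = (bit x (k * m + (r - 1)) && !anyBelow x (k * m)) := by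
  rw [blockVal, if_neg hr₀, if_pos hr]

theorem blockVal_of_lt (x : Fin n → Bool) {k r : ℕ} (hmr : m < r) (hr : r ≤ 2 * m + 1) :
    blockVal m x k r = (anyBelow x (k * m + (r - (m + 1))) && !anyBelow x (k * m)) := by
  rw [blockVal, if_neg (by omega), if_neg (by omega), if_pos hr]

theorem blockVal_top (x : Fin n → Bool) (k : ℕ) :
    blockVal m x k (2 * m + 2) = anyBelow x (k * m + m) := by
  rw [blockVal, if_neg (by omega), if_neg (by omega), if_neg (by omega)]

theorem exists_eq_block (i : ℕ) (hi : n < i) :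
    ∃ k r, r < 2 * m + 3 ∧ i = n + 1 + k * (2 * m + 3) + r :=
  ⟨(i - (n + 1)) / (2 * m + 3), (i - (n + 1)) % (2 * m + 3), Nat.mod_lt _ (by omega),
    by have := Nat.div_add_mod' (i - (n + 1)) (2 * m + 3); omega⟩

theorem block_div_mod {k r : ℕ} (hr : r < 2 * m + 3) :
    (n + 1 + k * (2 * m + 3) + r - (n + 1)) / (2 * m + 3) = k ∧
      (n + 1 + k * (2 * m + 3) + r - (n + 1)) % (2 * m + 3) = r := by
  rw [show n + 1 + k * (2 * m + 3) + r - (n + 1) = r + (2 * m + 3) * k by ring_nf; omega]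
  exact ⟨by rw [Nat.add_mul_div_left _ _ (by omega), Nat.div_eq_of_lt hr, zero_add],
    by rw [Nat.add_mul_mod_self_left, Nat.mod_eq_of_lt hr]⟩

theorem gate_block {k r : ℕ} (hr : r < 2 * m + 3) :
    (gate m (n + 1 + k * (2 * m + 3) + r) : Gate n) = blockGate m k r := by
  obtain ⟨hdiv, hmod⟩ := block_div_mod (n := n) m hr
  rw [gate, dif_neg (by omega), if_neg (by omega), hdiv, hmod]

theorem val_block (x : Fin n → Bool) {k r : ℕ} (hr : r < 2 * m + 3) :
    val m x (n + 1 + k * (2 * m + 3) + r) = blockVal m x k r := by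
  obtain ⟨hdiv, hmod⟩ := block_div_mod (n := n) m hr
  rw [val, if_neg (by omega), hdiv, hmod]

theorem val_min (x : Fin n → Bool) (t : ℕ) : val m x (min t n) = bit x t := by
  rw [val, if_pos (min_le_right t n)]
  rcases le_total t n with h | h
  · rw [min_eq_left h]
  · simp [min_eq_right h, bit, Nat.not_lt.mpr h]

theorem val_add_mul (x : Fin n → Bool) (k : ℕ) :
    val m x (n + k * (2 * m + 3)) = anyBelow x (k * m) := by
  cases k with
  | zero => simp [val, bit, anyBelow_zero]
  | succ k =>
    rw [show n + (k + 1) * (2 * m + 3) = n + 1 + k * (2 * m + 3) + (2 * m + 2) by ring,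
      val_block m x (by omega), blockVal_top, add_one_mul]

theorem gate_deps_lt (i : ℕ) : ∀ j ∈ (gate m i : Gate n).deps, j < i := by
  rcases lt_trichotomy i n with hi | rfl | hi
  · simp [gate, hi, Gate.deps]
  · simp [gate, Gate.deps]
  · obtain ⟨k, r, hr, rfl⟩ := exists_eq_block m i hi
    rw [gate_block m hr, blockGate]
    split_ifs <;> simp [Gate.deps] <;> omega

theorem blockVal_eq_eval (x : Fin n → Bool) {k r : ℕ} (hr : r < 2 * m + 3) :
    blockVal m x k r = (blockGate m k r : Gate n).eval x (val m x) := by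
  have hbase : n + 1 + k * (2 * m + 3) - 1 = n + k * (2 * m + 3) := by omega
  rw [blockGate]
  split_ifs with h0 h1 h2 h3
  · rw [h0, blockVal_zero, Gate.eval, hbase, val_add_mul]
  · rw [blockVal_of_le m x h0 h1, Gate.eval, val_min, ← add_zero (n + 1 + _),
      val_block m x (by omega), blockVal_zero]
  · rw [blockVal_of_lt m x (by omega) (by omega), h2, Nat.sub_self, add_zero, Bool.and_not_self,
      Gate.eval]
  · obtain ⟨j, rfl⟩ : ∃ j, r = m + 2 + j := ⟨r - (m + 2), by omega⟩
    rw [blockVal_of_lt m x (by omega) h3, Gate.eval,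
      show n + 1 + k * (2 * m + 3) + (m + 2 + j) - 1 =
        n + 1 + k * (2 * m + 3) + (m + 1 + j) by omega,
      show n + 1 + k * (2 * m + 3) + (m + 2 + j) - m - 1 =
        n + 1 + k * (2 * m + 3) + (j + 1) by omega,
      val_block m x (by omega), val_block m x (by omega), blockVal_of_lt m x (by omega) (by omega),
      blockVal_of_le m x (by omega) (by omega), show m + 2 + j - (m + 1) = j + 1 by omega,
      show m + 1 + j - (m + 1) = j by omega, Nat.add_sub_cancel, ← add_assoc, anyBelow_succ]
    cases anyBelow x (k * m) <;> simp
  · obtain rfl : r = 2 * m + 2 := by omega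
    rw [blockVal_top, Gate.eval, hbase, val_add_mul, Nat.add_sub_assoc (by omega),
      show 2 * m + 2 - 1 = 2 * m + 1 by omega, val_block m x (by omega),
      blockVal_of_lt m x (by omega) le_rfl, show 2 * m + 1 - (m + 1) = m by omega]
    cases h : anyBelow x (k * m)
    · simp
    · simp [anyBelow_mono x (Nat.le_add_right _ m) h]

theorem val_eq_eval (x : Fin n → Bool) (i : ℕ) :
    val m x i = (gate m i : Gate n).eval x (val m x) := by
  rcases lt_trichotomy i n with hi | rfl | hi
  · simp [val, gate, hi, hi.le, bit, Gate.eval]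
  · simp [val, gate, bit, Gate.eval]
  · obtain ⟨k, r, hr, rfl⟩ := exists_eq_block m i hi
    rw [gate_block m hr, val_block m x hr, blockVal_eq_eval m x hr]

theorem anyBelow_switch_of_blockVal (x : Fin n → Bool) {k r : ℕ} (hr₀ : r ≠ 0)
    (hr : r < 2 * m + 2) (h : blockVal m x k r = true) :
    anyBelow x (k * m) = false ∧ anyBelow x (k * m + m) = true := by
  rcases le_or_gt r m with hrm | hrm
  · rw [blockVal_of_le m x hr₀ hrm, Bool.and_eq_true, Bool.not_eq_true'] at h
    refine ⟨h.2, anyBelow_mono x (show k * m + (r - 1) + 1 ≤ k * m + m by omega) ?_⟩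
    rw [anyBelow_succ, h.1, Bool.or_true]
  · rw [blockVal_of_lt m x hrm (by omega), Bool.and_eq_true, Bool.not_eq_true'] at h
    exact ⟨h.2, anyBelow_mono x (by omega) h.1⟩

theorem lt_of_isInner_gate {i : ℕ} (h : (gate m i : Gate n).isInner = true) : n < i := by
  by_contra! hi
  rcases hi.lt_or_eq with hi | rfl
  · simp [gate, hi, Gate.isInner] at h
  · simp [gate, Gate.isInner] at h

end OrCircuit

theorem Monotone.exists_eq_of_switch_in_block {P : ℕ → Prop} (hP : Monotone P) (m : ℕ) :
    ∃ k₀, ∀ k, ¬P (k * m) → P (k * m + m) → k = k₀ := by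
  by_cases h : ∃ k, ¬P (k * m) ∧ P (k * m + m)
  · obtain ⟨k₀, hk₀, hk₀'⟩ := h
    refine ⟨k₀, fun k hk hk' => ?_⟩
    by_contra hne
    rcases Nat.lt_or_gt_of_ne hne with hlt | hlt
    · exact hk₀ (hP (by nlinarith) hk')
    · exact hk (hP (by nlinarith) hk₀')
  · push Not at h
    exact ⟨0, fun k hk hk' => absurd hk' (h k hk)⟩

open OrCircuit in
def orCircuit (n m l : ℕ) : Circuit n where
  size := n + 1 + l * (2 * m + 3)
  gates i := gate m i
  out := ⟨n + l * (2 * m + 3), by omega⟩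
  wf i := gate_deps_lt m i

theorem orCircuit_isConsistent (n m l : ℕ) (x : Fin n → Bool) :
    (orCircuit n m l).IsConsistent x (OrCircuit.val m x) :=
  fun i _ => OrCircuit.val_eq_eval m x i

theorem orCircuit_computes {n m l : ℕ} (h : n ≤ l * m) :
    (orCircuit n m l).Computes (ORf n) := by
  intro x
  rw [Circuit.output, (orCircuit_isConsistent n m l x).evalGate_eq]
  exact (OrCircuit.val_add_mul m x l).trans (OrCircuit.anyBelow_of_le x h)

open Finset in
theorem orCircuit_energyAt_le (n m l : ℕ) (x : Fin n → Bool) :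
    (orCircuit n m l).energyAt x ≤ 2 * l + (2 * m + 3) := by
  obtain ⟨k₀, hk₀⟩ := Monotone.exists_eq_of_switch_in_block
    (P := fun t => OrCircuit.anyBelow x t = true) (fun _ _ h => OrCircuit.anyBelow_mono x h) m
  let base (k : ℕ) := n + 1 + k * (2 * m + 3)
  -- the masks, the gates `F_k`, and the block `k₀` containing the first `1`
  refine (Circuit.energyAt_le_card x ((range l).image base ∪
    (range l).image (base · + (2 * m + 2)) ∪ (range (2 * m + 3)).image (base k₀ + ·)) ?_).trans ?_
  · intro i hinner hval
    obtain ⟨k, r, hr, hi⟩ :=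
      OrCircuit.exists_eq_block m i (OrCircuit.lt_of_isInner_gate m hinner)
    have hk : k < l := by
      by_contra! hlk
      have : (i : ℕ) < n + 1 + l * (2 * m + 3) := i.isLt
      have := Nat.mul_le_mul_right (2 * m + 3) hlk
      omega
    rw [(orCircuit_isConsistent n m l x).evalGate_eq, hi, OrCircuit.val_block m x hr] at hval
    simp only [mem_union, mem_image, mem_range]
    rcases eq_or_ne r 0 with rfl | hr₀
    · exact .inl (.inl ⟨k, hk, hi.symm⟩)
    rcases eq_or_ne r (2 * m + 2) with rfl | hrt
    · exact .inl (.inr ⟨k, hk, hi.symm⟩)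
    obtain ⟨hfirst, hlast⟩ := OrCircuit.anyBelow_switch_of_blockVal m x hr₀ (by omega) hval
    obtain rfl := hk₀ k (by simpa using hfirst) hlast
    exact .inr ⟨r, hr, hi.symm⟩
  · refine (card_union_le _ _).trans ?_
    grw [card_union_le, card_image_le, card_image_le, card_image_le]
    simp only [card_range]
    omega

theorem EC_ORf_le {n m l : ℕ} (h : n ≤ l * m) : EC (ORf n) ≤ 2 * l + (2 * m + 3) :=
  EC_le_of_computes (orCircuit_computes h) (orCircuit_energyAt_le n m l)

theorem EC_ORf_le_sqrt (n : ℕ) : EC (ORf n) ≤ 4 * n.sqrt + 7 := by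
  have := EC_ORf_le (Nat.lt_succ_sqrt n).le
  omega

/-- There is a constant `c > 0` such that for every positive `n`,
`EC(OR_n) ≤ c·√n`. -/
theorem stmt7 : ∃ c : ℝ, 0 < c ∧ ∀ n : ℕ, 0 < n →
    (EC (ORf n) : ℝ) ≤ c * Real.sqrt n := by
  refine ⟨11, by norm_num, fun n hn => ?_⟩
  have hEC : (EC (ORf n) : ℝ) ≤ 4 * n.sqrt + 7 := by exact_mod_cast EC_ORf_le_sqrt n
  have hsqrt : (n.sqrt : ℝ) ≤ Real.sqrt n := Real.nat_sqrt_le_real_sqrt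
  have hone : 1 ≤ Real.sqrt n := Real.one_le_sqrt.mpr (by exact_mod_cast hn)
  linarith
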